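/- Let P_m(w) := ∑_{μ=0}^m c^m_{m−μ,k} · G_{μ,k}(w), where G_{μ,k}(w) = ∂_s^μ ζ(s,w)|_{s=−k} for a function ζ holomorphic in (s,w) satisfying ∂_w ζ(s,w) = −s ζ(s+1,w), and c^m_{μ,k} = ((−1)^k/k!)(m!/(m−μ)!)H_k(μ). Then ∂/∂w of ∑_{μ=0}^m c^m_{m−μ,k} G_{μ,k}(w) = −∑_{μ=0}^m c^m_{m−μ,k−1} G_{μ,k−1}(w) for all k ≥ 1. -/

import Mathlib

/-!
Joint analyticity lets `∂_w` commute with `∂_s^μ`, so `∂_w G_{μ,k}` is `∂_s^μ (-s ζ(s+1,w))`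
at `s = -k`, which by the Leibniz rule is `k G_{μ,k-1} - μ G_{μ-1,k-1}`. After shifting the index
of the second sum, the coefficient of `G_{μ,k-1}` in `∂_w P_{m,k}` is
`k c^m_{m-μ,k} - (μ+1) c^m_{m-μ-1,k}`, and this is `-c^m_{m-μ,k-1}` by the recursion
`H_{k+1}(μ+1) = H_k(μ+1) + H_{k+1}(μ)/(k+1)`, obtained by sorting the monotone sequences
according to whether they end in the top value.
-/

open Finset Complex

/-- Multiple harmonic sum `H_k(μ)`. -/
def mharm (k μ : ℕ) : ℚ :=
  ∑ f ∈ Finset.univ.filter (fun f : Fin μ → Fin k => ∀ i j, i ≤ j → f i ≤ f j),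
    ∏ i, (1 : ℚ) / ((f i : ℕ) + 1)

/-- `c^m_{μ,k} = ((−1)^k/k!)·(m!/(m−μ)!)·H_k(μ)`. -/
def cBM (m μ k : ℕ) : ℚ :=
  ((-1) ^ k / (k.factorial : ℚ)) * ((m.factorial : ℚ) / ((m - μ).factorial : ℚ)) * mharm k μ

theorem mharm_zero_right (k : ℕ) : mharm k 0 = 1 := by
  simp [mharm]

theorem Fin.monotone_snoc_last {μ k : ℕ} {g : Fin μ → Fin (k + 1)} (hg : Monotone g) :
    Monotone (Fin.snoc g (Fin.last k) : Fin (μ + 1) → Fin (k + 1)) := by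
  intro i j hij
  induction j using Fin.lastCases with
  | last => simpa using Fin.le_last _
  | cast j =>
    induction i using Fin.lastCases with
    | last => exact absurd hij (Fin.castSucc_lt_last j).not_ge
    | cast i => simpa using hg (Fin.castSucc_le_castSucc_iff.mp hij)

theorem sum_monotone_last_eq_last (k μ : ℕ) :
    ∑ f ∈ (univ.filter (fun f : Fin (μ + 1) → Fin (k + 1) => ∀ i j, i ≤ j → f i ≤ f j)).filter
      (fun f => f (Fin.last μ) = Fin.last k), ∏ i, (1 : ℚ) / ((f i : ℕ) + 1) =
      mharm (k + 1) μ / (k + 1) := by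
  rw [mharm, Finset.sum_div]
  refine Finset.sum_bij' (fun f _ => Fin.init f) (fun g _ => Fin.snoc g (Fin.last k))
    ?_ ?_ ?_ ?_ ?_
  · intro f hf
    simp only [Finset.mem_filter, Finset.mem_univ, true_and] at hf ⊢
    exact fun i j hij => hf.1 _ _ (Fin.castSucc_le_castSucc_iff.mpr hij)
  · intro g hg
    simp only [Finset.mem_filter, Finset.mem_univ, true_and] at hg ⊢
    exact ⟨fun i j hij => Fin.monotone_snoc_last (fun i j hij => hg i j hij) hij, by simp⟩
  · intro f hf
    simp only [Finset.mem_filter, Finset.mem_univ, true_and] at hf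
    rw [← hf.2, Fin.snoc_init_self]
  · intro g _
    exact Fin.init_snoc _ _
  · intro f hf
    simp only [Finset.mem_filter, Finset.mem_univ, true_and] at hf
    simp [Fin.prod_univ_castSucc, hf.2, Fin.init, div_eq_mul_inv, mul_comm]

theorem sum_monotone_last_ne_last (k μ : ℕ) :
    ∑ f ∈ (univ.filter (fun f : Fin (μ + 1) → Fin (k + 1) => ∀ i j, i ≤ j → f i ≤ f j)).filter
      (fun f => f (Fin.last μ) ≠ Fin.last k), ∏ i, (1 : ℚ) / ((f i : ℕ) + 1) =
      mharm k (μ + 1) := by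
  rw [mharm]
  refine Finset.sum_bij' (fun f hf j => (f j).castPred ?_) (fun g _ j => (g j).castSucc)
    ?_ ?_ ?_ ?_ ?_
  · simp only [Finset.mem_filter, Finset.mem_univ, true_and] at hf
    exact Fin.ne_last_of_lt ((hf.1 _ _ (Fin.le_last j)).trans_lt (Fin.lt_last_iff_ne_last.mpr hf.2))
  · intro f hf
    simp only [Finset.mem_filter, Finset.mem_univ, true_and] at hf ⊢
    exact fun i j hij => Fin.castPred_le_castPred_iff.mpr (hf.1 i j hij)
  · intro g hg
    simp only [Finset.mem_filter, Finset.mem_univ, true_and] at hg ⊢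
    exact ⟨fun i j hij => Fin.castSucc_le_castSucc_iff.mpr (hg i j hij),
      (Fin.castSucc_lt_last _).ne⟩
  · intro f _
    simp
  · intro g _
    simp
  · intro f _
    simp

theorem mharm_succ_succ (k μ : ℕ) :
    mharm (k + 1) (μ + 1) = mharm k (μ + 1) + mharm (k + 1) μ / (k + 1) := by
  rw [mharm, ← Finset.sum_filter_add_sum_filter_not _ (fun f => f (Fin.last μ) = Fin.last k),
    sum_monotone_last_eq_last, sum_monotone_last_ne_last, add_comm]

theorem cBM_zero_succ (m K : ℕ) : (K + 1) * cBM m 0 (K + 1) + cBM m 0 K = 0 := by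
  simp only [cBM, mharm_zero_right, Nat.factorial_succ]
  field_simp
  push_cast
  ring

theorem cBM_succ_succ (m μ K : ℕ) (hμ : μ < m) :
    (K + 1) * cBM m (μ + 1) (K + 1) - (m - μ : ℕ) * cBM m μ (K + 1) + cBM m (μ + 1) K = 0 := by
  obtain ⟨n, rfl⟩ : ∃ n, m = μ + n + 1 := ⟨m - μ - 1, by omega⟩
  have h₁ : μ + n + 1 - μ = n + 1 := by omega
  have h₂ : μ + n + 1 - (μ + 1) = n := by omega
  simp only [cBM, mharm_succ_succ, h₁, h₂, Nat.factorial_succ]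
  field_simp
  push_cast
  ring

theorem sum_cBM_mul_shift {R : Type*} [Field R] [CharZero R] (m K : ℕ) (a : ℕ → R) :
    ∑ μ ∈ range (m + 1), (cBM m (m - μ) (K + 1) : R) * ((K + 1) * a μ - μ * a (μ - 1)) =
      -∑ μ ∈ range (m + 1), (cBM m (m - μ) K : R) * a μ := by
  have hinner : ∀ μ < m, (K + 1 : R) * cBM m (m - μ) (K + 1) -
      (μ + 1 : R) * cBM m (m - (μ + 1)) (K + 1) = -(cBM m (m - μ) K : R) := by
    intro μ hμ
    have h₁ : m - (μ + 1) + 1 = m - μ := by omega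
    have h₂ : m - (m - (μ + 1)) = μ + 1 := by omega
    have := cBM_succ_succ m (m - (μ + 1)) K (by omega)
    rw [h₁, h₂] at this
    exact_mod_cast eq_neg_of_add_eq_zero_left this
  have hlast : (K + 1 : R) * cBM m 0 (K + 1) = -(cBM m 0 K : R) := by
    exact_mod_cast eq_neg_of_add_eq_zero_left (cBM_zero_succ m K)
  simp only [mul_sub, Finset.sum_sub_distrib]
  rw [Finset.sum_range_succ' (fun μ => _ * (μ * a (μ - 1))), Finset.sum_range_succ,
    Finset.sum_range_succ _ m, Nat.sub_self]
  have hbulk : ∑ μ ∈ range m, (cBM m (m - μ) (K + 1) : R) * ((K + 1) * a μ) -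
      ∑ μ ∈ range m, (cBM m (m - (μ + 1)) (K + 1) : R) * ((μ + 1 : ℕ) * a (μ + 1 - 1)) =
      -∑ μ ∈ range m, (cBM m (m - μ) K : R) * a μ := by
    rw [← Finset.sum_sub_distrib, ← Finset.sum_neg_distrib]
    refine Finset.sum_congr rfl fun μ hμ => ?_
    rw [Nat.add_sub_cancel]
    push_cast
    linear_combination a μ * hinner μ (Finset.mem_range.mp hμ)
  simp only [Nat.cast_zero, zero_mul, mul_zero, add_zero]
  linear_combination hbulk + a m * hlast

section PartialDerivatives

variable {𝕜 : Type*} [NontriviallyNormedField 𝕜] {E : Type*} [NormedAddCommGroup E]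
  [NormedSpace 𝕜 E] {F : 𝕜 × 𝕜 → E}

theorem HasFDerivAt.hasDerivAt_fst_slice {F' : 𝕜 × 𝕜 →L[𝕜] E} {s w : 𝕜}
    (hF : HasFDerivAt F F' (s, w)) :
    HasDerivAt (fun t => F (t, w)) (F' (1, 0)) s :=
  (hF.comp s (hasFDerivAt_prodMk_left (𝕜 := 𝕜) s w)).hasDerivAt

theorem HasFDerivAt.hasDerivAt_snd_slice {F' : 𝕜 × 𝕜 →L[𝕜] E} {s w : 𝕜}
    (hF : HasFDerivAt F F' (s, w)) :
    HasDerivAt (fun t => F (s, t)) (F' (0, 1)) w :=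
  (hF.comp w (hasFDerivAt_prodMk_right (𝕜 := 𝕜) s w)).hasDerivAt

variable [CompleteSpace E]

theorem AnalyticOnNhd.analyticOnNhd_deriv_fst (hF : AnalyticOnNhd 𝕜 F Set.univ) :
    AnalyticOnNhd 𝕜 (fun p : 𝕜 × 𝕜 => deriv (fun t => F (t, p.2)) p.1) Set.univ := by
  have h : (fun p : 𝕜 × 𝕜 => deriv (fun t => F (t, p.2)) p.1) = fun p => fderiv 𝕜 F p (1, 0) :=
    funext fun p => (hF p trivial).differentiableAt.hasFDerivAt.hasDerivAt_fst_slice.deriv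
  rw [h]
  exact fun p _ => (ContinuousLinearMap.apply 𝕜 E ((1 : 𝕜), (0 : 𝕜))).analyticAt _ |>.comp
    (hF.fderiv p trivial)

theorem AnalyticOnNhd.deriv_snd_deriv_fst_comm (hF : AnalyticOnNhd 𝕜 F Set.univ) (s w : 𝕜) :
    deriv (fun w' => deriv (fun s' => F (s', w')) s) w =
      deriv (fun s' => deriv (fun w' => F (s', w')) w) s := by
  have hD : ∀ p, HasFDerivAt F (fderiv 𝕜 F p) p :=
    fun p => (hF p trivial).differentiableAt.hasFDerivAt
  have hD2 : HasFDerivAt (fderiv 𝕜 F) (fderiv 𝕜 (fderiv 𝕜 F) (s, w)) (s, w) :=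
    (hF.fderiv (s, w) trivial).differentiableAt.hasFDerivAt
  have hsymm : IsSymmSndFDerivAt 𝕜 F (s, w) :=
    (hF (s, w) trivial).contDiffAt.isSymmSndFDerivAt_of_omega
  have h1 : (fun w' => deriv (fun s' => F (s', w')) s) = fun w' => fderiv 𝕜 F (s, w') (1, 0) :=
    funext fun w' => (hD (s, w')).hasDerivAt_fst_slice.deriv
  have h2 : (fun s' => deriv (fun w' => F (s', w')) w) = fun s' => fderiv 𝕜 F (s', w) (0, 1) :=
    funext fun s' => (hD (s', w)).hasDerivAt_snd_slice.deriv
  rw [h1, h2, (hD2.clm_apply (hasFDerivAt_const _ _)).hasDerivAt_snd_slice.deriv,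
    (hD2.clm_apply (hasFDerivAt_const _ _)).hasDerivAt_fst_slice.deriv]
  simpa using hsymm (0, 1) (1, 0)

theorem AnalyticOnNhd.hasDerivAt_iteratedDeriv_fst (hF : AnalyticOnNhd 𝕜 F Set.univ) (n : ℕ)
    (s w : 𝕜) :
    HasDerivAt (fun w => iteratedDeriv n (fun s => F (s, w)) s)
      (iteratedDeriv n (fun s => deriv (fun w => F (s, w)) w) s) w := by
  induction n generalizing F with
  | zero =>
    simpa using
      (hF (s, w) trivial).differentiableAt.hasFDerivAt.hasDerivAt_snd_slice.differentiableAt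
  | succ n ih =>
    simp only [iteratedDeriv_succ']
    convert ih hF.analyticOnNhd_deriv_fst using 2
    funext s'
    exact (hF.deriv_snd_deriv_fst_comm s' w).symm

end PartialDerivatives

theorem iteratedDeriv_fun_id_mul {𝕜 : Type*} [NontriviallyNormedField 𝕜] {f : 𝕜 → 𝕜} {x : 𝕜}
    {n : ℕ} (hf : ContDiffAt 𝕜 n f x) :
    iteratedDeriv n (fun s => s * f s) x =
      x * iteratedDeriv n f x + n * iteratedDeriv (n - 1) f x := by
  rw [iteratedDeriv_fun_mul (f := fun s => s) contDiffAt_id hf]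
  rcases n with _ | n
  · simp
  · rw [Finset.sum_range_succ', Finset.sum_range_succ']
    simp [iteratedDeriv_fun_id, add_comm]

/-- The balanced Kinkelin hierarchy `∂_w P_{m,k} = −P_{m,k−1}`: with
`G_{μ,k}(w) = ∂_s^μ ζ(s,w)|_{s=−k}` for a `ζ` entire in `(s,w)` with
`∂_w ζ(s,w) = −s·ζ(s+1,w)`, and `P_{m,k}(w) = ∑_{μ=0}^m c^m_{m−μ,k}·G_{μ,k}(w)`,
one has `∂_w P_{m,k}(w) = −P_{m,k−1}(w)` for all `k ≥ 1`. -/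
theorem balanced_hierarchy (ζ : ℂ → ℂ → ℂ)
    (hζ : AnalyticOn ℂ (fun p : ℂ × ℂ => ζ p.1 p.2) Set.univ)
    (hrec : ∀ s w : ℂ, deriv (fun w' => ζ s w') w = -s * ζ (s + 1) w)
    (m k : ℕ) (hk : 1 ≤ k) (w : ℂ) :
    deriv (fun w' : ℂ => ∑ μ ∈ Finset.range (m + 1),
        (cBM m (m - μ) k : ℂ) * iteratedDeriv μ (fun s => ζ s w') (-(k : ℂ))) w =
      -∑ μ ∈ Finset.range (m + 1),
        (cBM m (m - μ) (k - 1) : ℂ) * iteratedDeriv μ (fun s => ζ s w) (-((k : ℂ) - 1)) := by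
  obtain ⟨K, rfl⟩ : ∃ K, k = K + 1 := ⟨k - 1, by omega⟩
  have hζ' : AnalyticOnNhd ℂ (fun p : ℂ × ℂ => ζ p.1 p.2) Set.univ := analyticOn_univ.mp hζ
  have hG : ∀ μ, HasDerivAt (fun w' => iteratedDeriv μ (fun s => ζ s w') (-((K + 1 : ℕ) : ℂ)))
      (((K : ℂ) + 1) * iteratedDeriv μ (fun s => ζ s w) (-K) -
        μ * iteratedDeriv (μ - 1) (fun s => ζ s w) (-K)) w := by
    intro μ
    have hshift : ContDiff ℂ μ (fun s => ζ (s + 1) w) :=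
      hζ'.contDiff.comp ((contDiff_id.add contDiff_const).prodMk contDiff_const)
    refine (hζ'.hasDerivAt_iteratedDeriv_fst μ (-((K + 1 : ℕ) : ℂ)) w).congr_deriv ?_
    simp only [hrec, neg_mul, iteratedDeriv_fun_neg, iteratedDeriv_fun_id_mul hshift.contDiffAt,
      iteratedDeriv_comp_add_const _ (fun s => ζ s w)]
    push_cast
    ring_nf
  rw [(HasDerivAt.fun_sum fun μ _ => (hG μ).const_mul _).deriv, sum_cBM_mul_shift]
  simp only [add_tsub_cancel_right, Nat.cast_add, Nat.cast_one, add_sub_cancel_right]
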